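/- For τ in the upper half plane with q = e^{2πiτ}, the partial theta function satisfies ∑_{n≥1} q^{n^2} = -∫_{-1/2}^{1/2} e^{4πit} A_2(t - τ/2, 0; τ) dt, where A_2(w,z;τ) = e^{2πiw} ∑_{n∈ℤ} q^{n(n+1)} e^{2πinz} / (1 - e^{2πiw} q^n) is the level 2 Appell–Lerch sum. -/

import Mathlib

open Real

/-- The Appell–Lerch sum of level 2 at `z = 0`:
`A_2(w,0;τ) = e^{2πiw} ∑_{n∈ℤ} q^{n(n+1)} / (1 - e^{2πiw} q^n)` with `q = e^{2πiτ}`. -/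
noncomputable def appellLerch2 (w τ : ℂ) : ℂ :=
  Complex.exp (2 * (π : ℂ) * Complex.I * w) *
    ∑' n : ℤ, Complex.exp (2 * (π : ℂ) * Complex.I * τ) ^ (n * (n + 1)) /
      (1 - Complex.exp (2 * (π : ℂ) * Complex.I * w) *
        Complex.exp (2 * (π : ℂ) * Complex.I * τ) ^ n)

/-! Write `x = e^{2πit}`, `q = e^{2πiτ}` and `s = e^{-πiτ}`, so that `s² q = 1` and the `n`-th term
of the integrand is `s q^{n(n+1)} x³ / (1 - s q^n x)`. By Cauchy's theorem and Cauchy's integral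
formula on the unit circle, `∫ x³ / (1 - c x) dt` is `0` for `‖c‖ < 1` and `-c⁻³` for `‖c‖ > 1`.
Since `‖s q^n‖ < 1` exactly when `n ≥ 1`, only the terms `n = -k ≤ 0` survive, each contributing
`-s q^{k²-k} (s q^{-k})⁻³ = -q^{(k+1)²}`. The series is dominated on the contour by
`‖s‖ ‖q‖^{n(n+1)} / δ`, where `δ` bounds the denominators away from `0`, so it may be integrated
termwise. -/

open Complex Metric

lemma circleIntegral_eq_two_pi_I_mul_integral (f : ℂ → ℂ) :
    (∮ z in C(0, 1), f z) =
      2 * π * I * ∫ t in (-1/2 : ℝ)..1/2, exp (2 * π * I * t) * f (exp (2 * π * I * t)) := by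
  set g : ℝ → ℂ := fun θ => deriv (circleMap 0 1) θ • f (circleMap 0 1 θ)
  have hg : Function.Periodic g (2 * π) := fun θ => by
    simp only [g, deriv_circleMap, periodic_circleMap 0 1 θ]
  calc (∮ z in C(0, 1), f z) = ∫ θ in 2 * π * (-1/2)..2 * π * (1/2), g θ := by
        have := hg.intervalIntegral_add_eq 0 (-π)
        rw [zero_add] at this
        rw [circleIntegral, this]
        congr 1 <;> ring
    _ = (2 * π : ℝ) • ∫ t in (-1/2 : ℝ)..1/2, g (2 * π * t) := by
        rw [intervalIntegral.integral_comp_mul_left g (by positivity),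
          smul_inv_smul₀ (by positivity)]
    _ = _ := by
        rw [← intervalIntegral.integral_smul, ← intervalIntegral.integral_const_mul]
        congr 1 with t
        simp only [g, deriv_circleMap, circleMap_zero, ofReal_one, one_mul, smul_eq_mul,
          real_smul]
        push_cast
        ring_nf

lemma circleIntegral_pow_div_one_sub_mul_of_norm_lt_one (m : ℕ) {c : ℂ} (hc : ‖c‖ < 1) :
    (∮ z in C(0, 1), z ^ m / (1 - c * z)) = 0 := by
  have hden : ∀ z ∈ closedBall (0 : ℂ) 1, 1 - c * z ≠ 0 := fun z hz => by
    have : ‖c * z‖ < 1 := by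
      rw [norm_mul]
      exact (mul_le_of_le_one_right (norm_nonneg c) (mem_closedBall_zero_iff.mp hz)).trans_lt hc
    exact sub_ne_zero.mpr fun h => by simp [← h] at this
  have hd : DifferentiableOn ℂ (fun z => z ^ m / (1 - c * z)) (closedBall 0 1) :=
    (differentiableOn_pow m).div (by fun_prop) hden
  exact (hd.diffContOnCl_ball subset_rfl).circleIntegral_eq_zero zero_le_one

lemma circleIntegral_pow_div_one_sub_mul_of_one_lt_norm (m : ℕ) {c : ℂ} (hc : 1 < ‖c‖) :
    (∮ z in C(0, 1), z ^ m / (1 - c * z)) = -(2 * π * I) / c ^ (m + 1) := by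
  have hc₀ : c ≠ 0 := norm_pos_iff.mp (one_pos.trans hc)
  have hpole : c⁻¹ ∈ ball (0 : ℂ) 1 := by
    rw [mem_ball_zero_iff, norm_inv]
    exact inv_lt_one_of_one_lt₀ hc
  -- an identity of functions: at the pole `z = c⁻¹` both sides are junk `0`
  have hcauchy : (fun z => z ^ m / (1 - c * z)) = fun z => -c⁻¹ * z ^ m / (z - c⁻¹) := by
    funext z
    rw [show 1 - c * z = -c * (z - c⁻¹) by field_simp; ring, div_mul_eq_div_div_swap]
    ring
  rw [hcauchy, circleIntegral_div_sub_of_differentiable_on_off_countable Set.countable_empty hpole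
    (by fun_prop) (fun z _ => by fun_prop), inv_pow]
  field_simp
  ring

lemma integral_exp_pow_div_one_sub_mul (m : ℕ) (c : ℂ) :
    ∫ t in (-1/2 : ℝ)..1/2, exp (2 * π * I * t) ^ (m + 1) / (1 - c * exp (2 * π * I * t)) =
      (2 * π * I)⁻¹ * ∮ z in C(0, 1), z ^ m / (1 - c * z) := by
  rw [circleIntegral_eq_two_pi_I_mul_integral, inv_mul_cancel_left₀ two_pi_I_ne_zero]
  simp only [pow_succ', mul_div_assoc]

lemma integral_exp_pow_div_one_sub_mul_of_norm_lt_one (m : ℕ) {c : ℂ} (hc : ‖c‖ < 1) :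
    ∫ t in (-1/2 : ℝ)..1/2, exp (2 * π * I * t) ^ (m + 1) / (1 - c * exp (2 * π * I * t)) = 0 := by
  rw [integral_exp_pow_div_one_sub_mul, circleIntegral_pow_div_one_sub_mul_of_norm_lt_one m hc,
    mul_zero]

lemma integral_exp_pow_div_one_sub_mul_of_one_lt_norm (m : ℕ) {c : ℂ} (hc : 1 < ‖c‖) :
    ∫ t in (-1/2 : ℝ)..1/2, exp (2 * π * I * t) ^ (m + 1) / (1 - c * exp (2 * π * I * t)) =
      -(c ^ (m + 1))⁻¹ := by
  rw [integral_exp_pow_div_one_sub_mul, circleIntegral_pow_div_one_sub_mul_of_one_lt_norm m hc]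
  field_simp [two_pi_I_ne_zero]

lemma intervalIntegral.hasSum_integral_of_norm_le {ι E : Type*} [Countable ι]
    [NormedAddCommGroup E] [NormedSpace ℝ E] [CompleteSpace E] {F : ι → ℝ → E} {u : ι → ℝ}
    {a b : ℝ} (hF : ∀ n, Continuous (F n)) (hu : Summable u) (hle : ∀ n t, ‖F n t‖ ≤ u n) :
    HasSum (fun n => ∫ t in a..b, F n t) (∫ t in a..b, ∑' n, F n t) :=
  intervalIntegral.hasSum_integral_of_dominated_convergence (fun n _ => u n)
    (fun n => (hF n).aestronglyMeasurable) (fun n => .of_forall fun t _ => hle n t)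
    (.of_forall fun _ _ => hu) intervalIntegrable_const
    (.of_forall fun t _ => (hu.of_norm_bounded (hle · t)).hasSum)

lemma summable_zpow_mul_add_one {r : ℝ} (hr₀ : 0 < r) (hr₁ : r < 1) :
    Summable fun n : ℤ => r ^ (n * (n + 1)) := by
  have hnat : Summable fun n : ℕ => r ^ ((n : ℤ) * (n + 1)) := by
    refine (summable_geometric_of_lt_one hr₀.le hr₁).of_nonneg_of_le (fun n => by positivity)
      fun n => ?_
    rw [← zpow_natCast]
    exact zpow_le_zpow_right_of_le_one₀ hr₀ hr₁.le (by nlinarith)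
  refine .of_nat_of_neg_add_one hnat (hnat.congr fun n => ?_)
  congr 1
  ring

lemma norm_exp_two_pi_I_mul_ofReal (t : ℝ) : ‖exp (2 * π * I * t)‖ = 1 := by
  simpa [mul_comm, mul_left_comm] using norm_exp_ofReal_mul_I (2 * π * t)

/-- `e^{4πit}` times the `n`-th term of `A_2(t - τ/2, 0; τ)`, in terms of `q = e^{2πiτ}` and
`s = e^{-πiτ}`. -/
noncomputable def appellLerch2Summand (q s : ℂ) (n : ℤ) (t : ℝ) : ℂ :=
  s * q ^ (n * (n + 1)) * (exp (2 * π * I * t) ^ 3 / (1 - s * q ^ n * exp (2 * π * I * t)))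

section AppellLerch

variable {q s : ℂ}

lemma norm_mul_zpow_le_of_one_le (hq₀ : q ≠ 0) (hq : ‖q‖ ≤ 1) {n : ℤ} (hn : 1 ≤ n) :
    ‖s * q ^ n‖ ≤ ‖s * q‖ := by
  rw [norm_mul, norm_mul, norm_zpow]
  gcongr
  simpa using zpow_le_zpow_right_of_le_one₀ (norm_pos_iff.mpr hq₀) hq hn

lemma norm_le_norm_mul_zpow_of_nonpos (hq₀ : q ≠ 0) (hq : ‖q‖ ≤ 1) {n : ℤ} (hn : n ≤ 0) :
    ‖s‖ ≤ ‖s * q ^ n‖ := by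
  rw [norm_mul, norm_zpow]
  exact le_mul_of_one_le_right (norm_nonneg s) (one_le_zpow_of_nonpos₀ (norm_pos_iff.mpr hq₀) hq hn)

lemma norm_mul_lt_one_of_sq_mul_eq_one (hsq : s ^ 2 * q = 1) (hq : ‖q‖ < 1) : ‖s * q‖ < 1 := by
  rw [← sq_lt_one_iff₀ (norm_nonneg _), ← norm_pow, mul_pow, sq q, ← mul_assoc, hsq, one_mul]
  exact hq

lemma one_lt_norm_of_sq_mul_eq_one (hsq : s ^ 2 * q = 1) (hq : ‖q‖ < 1) : 1 < ‖s‖ := by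
  rw [← one_lt_sq_iff₀ (norm_nonneg _), ← norm_pow]
  have : ‖s ^ 2‖ * ‖q‖ = 1 := by rw [← norm_mul, hsq, norm_one]
  nlinarith [norm_nonneg (s ^ 2), norm_nonneg q]

/-- The denominators stay away from `0`: `s q^n` lies outside the annulus
`‖s q‖ < |z| < ‖s‖` around the unit circle. -/
lemma min_le_norm_one_sub_mul_zpow_mul_exp (hsq : s ^ 2 * q = 1) (hq : ‖q‖ < 1) (n : ℤ) (t : ℝ) :
    min (1 - ‖s * q‖) (‖s‖ - 1) ≤ ‖1 - s * q ^ n * exp (2 * π * I * t)‖ := by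
  have hq₀ : q ≠ 0 := right_ne_zero_of_mul_eq_one hsq
  calc min (1 - ‖s * q‖) (‖s‖ - 1) ≤ |1 - ‖s * q ^ n‖| := by
        rcases le_or_gt n 0 with hn | hn
        · have := norm_le_norm_mul_zpow_of_nonpos (s := s) hq₀ hq.le hn
          exact le_abs.mpr (.inr (by linarith [min_le_right (1 - ‖s * q‖) (‖s‖ - 1)]))
        · have := norm_mul_zpow_le_of_one_le (s := s) hq₀ hq.le hn
          exact le_abs.mpr (.inl (by linarith [min_le_left (1 - ‖s * q‖) (‖s‖ - 1)]))
    _ = |‖(1 : ℂ)‖ - ‖s * q ^ n * exp (2 * π * I * t)‖| := by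
        rw [norm_one, norm_mul _ (cexp _), norm_exp_two_pi_I_mul_ofReal, mul_one]
    _ ≤ _ := abs_norm_sub_norm_le _ _

lemma min_one_sub_norm_mul_pos (hsq : s ^ 2 * q = 1) (hq : ‖q‖ < 1) :
    0 < min (1 - ‖s * q‖) (‖s‖ - 1) :=
  lt_min (sub_pos.mpr (norm_mul_lt_one_of_sq_mul_eq_one hsq hq))
    (sub_pos.mpr (one_lt_norm_of_sq_mul_eq_one hsq hq))

lemma continuous_appellLerch2Summand (hsq : s ^ 2 * q = 1) (hq : ‖q‖ < 1) (n : ℤ) :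
    Continuous (appellLerch2Summand q s n) := by
  refine continuous_const.mul (.div (by fun_prop) (by fun_prop) fun t => norm_pos_iff.mp ?_)
  exact (min_one_sub_norm_mul_pos hsq hq).trans_le (min_le_norm_one_sub_mul_zpow_mul_exp hsq hq n t)

lemma norm_appellLerch2Summand_le (hsq : s ^ 2 * q = 1) (hq : ‖q‖ < 1) (n : ℤ) (t : ℝ) :
    ‖appellLerch2Summand q s n t‖ ≤
      ‖s‖ / min (1 - ‖s * q‖) (‖s‖ - 1) * ‖q‖ ^ (n * (n + 1)) := by
  rw [appellLerch2Summand, norm_mul, norm_mul, norm_div, norm_pow, norm_exp_two_pi_I_mul_ofReal,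
    one_pow, norm_zpow, div_mul_eq_mul_div, mul_one_div]
  gcongr
  · exact min_one_sub_norm_mul_pos hsq hq
  · exact min_le_norm_one_sub_mul_zpow_mul_exp hsq hq n t

lemma hasSum_integral_appellLerch2Summand (hsq : s ^ 2 * q = 1) (hq : ‖q‖ < 1) :
    HasSum (fun n => ∫ t in (-1/2 : ℝ)..1/2, appellLerch2Summand q s n t)
      (∫ t in (-1/2 : ℝ)..1/2, ∑' n, appellLerch2Summand q s n t) :=
  intervalIntegral.hasSum_integral_of_norm_le (continuous_appellLerch2Summand hsq hq)
    ((summable_zpow_mul_add_one (norm_pos_iff.mpr (right_ne_zero_of_mul_eq_one hsq)) hq).mul_left _)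
    (norm_appellLerch2Summand_le hsq hq)

lemma integral_appellLerch2Summand_of_one_le (hsq : s ^ 2 * q = 1) (hq : ‖q‖ < 1) {n : ℤ}
    (hn : 1 ≤ n) : ∫ t in (-1/2 : ℝ)..1/2, appellLerch2Summand q s n t = 0 := by
  have hc : ‖s * q ^ n‖ < 1 := (norm_mul_zpow_le_of_one_le (right_ne_zero_of_mul_eq_one hsq)
    hq.le hn).trans_lt (norm_mul_lt_one_of_sq_mul_eq_one hsq hq)
  simp only [appellLerch2Summand]
  rw [intervalIntegral.integral_const_mul, integral_exp_pow_div_one_sub_mul_of_norm_lt_one 2 hc,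
    mul_zero]

lemma integral_appellLerch2Summand_neg_natCast (hsq : s ^ 2 * q = 1) (hq : ‖q‖ < 1) (k : ℕ) :
    ∫ t in (-1/2 : ℝ)..1/2, appellLerch2Summand q s (-k) t = -q ^ ((k + 1) ^ 2) := by
  have hq₀ : q ≠ 0 := right_ne_zero_of_mul_eq_one hsq
  have hs₀ : s ≠ 0 := pow_ne_zero_iff two_ne_zero |>.mp (left_ne_zero_of_mul_eq_one hsq)
  have hc : 1 < ‖s * q ^ (-k : ℤ)‖ := (one_lt_norm_of_sq_mul_eq_one hsq hq).trans_le
    (norm_le_norm_mul_zpow_of_nonpos hq₀ hq.le (by omega))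
  simp only [appellLerch2Summand]
  rw [intervalIntegral.integral_const_mul, integral_exp_pow_div_one_sub_mul_of_one_lt_norm 2 hc]
  have hexp : (-k : ℤ) * (-k + 1) = (k * k : ℕ) - k := by push_cast; ring
  rw [hexp, zpow_sub₀ hq₀, zpow_neg, zpow_natCast, zpow_natCast,
    show (k + 1) ^ 2 = k * k + k + k + 1 by ring, pow_succ, pow_add, pow_add]
  field_simp
  rw [pow_add]
  linear_combination (q ^ (k * k) * q ^ k) * hsq

lemma hasSum_integral_tsum_appellLerch2Summand (hsq : s ^ 2 * q = 1) (hq : ‖q‖ < 1) :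
    HasSum (fun k : ℕ => -q ^ ((k + 1) ^ 2))
      (∫ t in (-1/2 : ℝ)..1/2, ∑' n, appellLerch2Summand q s n t) := by
  have hinj : Function.Injective fun k : ℕ => -(k : ℤ) := neg_injective.comp Nat.cast_injective
  have hvanish : ∀ n ∉ Set.range fun k : ℕ => -(k : ℤ),
      ∫ t in (-1/2 : ℝ)..1/2, appellLerch2Summand q s n t = 0 := fun n hn =>
    integral_appellLerch2Summand_of_one_le hsq hq
      (by_contra fun h => hn ⟨n.natAbs, by dsimp only; omega⟩)
  have := (hinj.hasSum_iff hvanish).mpr (hasSum_integral_appellLerch2Summand hsq hq)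
  simpa only [Function.comp_def, integral_appellLerch2Summand_neg_natCast hsq hq] using this

end AppellLerch

/-- For `τ` in the upper half plane with `q = e^{2πiτ}`, the partial theta function satisfies
`∑_{n≥1} q^{n²} = -∫_{-1/2}^{1/2} e^{4πit} A_2(t - τ/2, 0; τ) dt`. -/
theorem partial_theta_appell_lerch (τ : ℂ) (hτ : 0 < τ.im) :
    (∑' n : ℕ, Complex.exp (2 * (π : ℂ) * Complex.I * τ) ^ ((n + 1) ^ 2))
      = -∫ t in (-(1 : ℝ)/2)..(1/2),
          Complex.exp (4 * (π : ℂ) * Complex.I * (t : ℂ)) * appellLerch2 ((t : ℂ) - τ/2) τ := by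
  set q := exp (2 * π * I * τ)
  set s := exp (-(π * I * τ))
  have hsq : s ^ 2 * q = 1 := by
    rw [sq, ← Complex.exp_add, ← Complex.exp_add, ← Complex.exp_zero]
    ring_nf
  have hq : ‖q‖ < 1 := UpperHalfPlane.norm_exp_two_pi_I_lt_one ⟨τ, hτ⟩
  have hintegrand (t : ℝ) : exp (4 * π * I * t) * appellLerch2 (t - τ / 2) τ =
      ∑' n, appellLerch2Summand q s n t := by
    have hx2 : exp (4 * π * I * t) = exp (2 * π * I * t) ^ 2 := by
      rw [sq, ← Complex.exp_add]; ring_nf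
    have hxs : exp (2 * π * I * (t - τ / 2)) = s * exp (2 * π * I * t) := by
      rw [← Complex.exp_add]; ring_nf
    rw [appellLerch2, hx2, hxs, ← tsum_mul_left, ← tsum_mul_left]
    congr 1 with n
    rw [appellLerch2Summand]
    ring
  simp_rw [hintegrand]
  have h := (hasSum_integral_tsum_appellLerch2Summand hsq hq).tsum_eq
  rw [tsum_neg] at h
  rw [← h, neg_neg]
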